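/- arXiv:2307.11955 — 3 statements merged into one kernel-verified Lean document; each statement's English description precedes it below -/
import Mathlib

section
/- Fix q ∈ ℝ^d with q ≠ 0, η > 0, x ∈ ℝ^d, and y ∈ {−1, 1}, and write p = ⟨q, x⟩. Define s : [0,∞) → ℝ by s(h) = (p y − ln(h η ‖q‖² + e^{p y})) / (‖q‖² y). Then s(0) = 0 and s'(h) = −η y e^{−y ⟨q, x − s(h) q⟩} for all h ≥ 0; that is, s is the IWA scaling function for the exponential loss ℓ̂(r) = e^{−y r}. -/
open scoped RealInnerProductSpace

/-!
With `D(h) = hη‖q‖² + e^{py}`, the formula gives `y ⟨q, x - s(h) q⟩ = log D(h)`, so the loss along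
the path is `1 / D(h)`, while differentiating the logarithm gives `s'(h) = -η / (y D(h))`.
The two agree because `y⁻¹ = y` for `y = ±1`.
-/

open Real

lemma inner_sub_smul_self_right {E : Type*} [NormedAddCommGroup E] [InnerProductSpace ℝ E]
    (q x : E) (c : ℝ) : ⟪q, x - c • q⟫ = ⟪q, x⟫ - c * ‖q‖ ^ 2 := by
  rw [inner_sub_right, real_inner_smul_right, real_inner_self_eq_norm_sq]

lemma hasDerivAt_sub_log_mul_add_div {a e c k t : ℝ} (ht : 0 < t * a + e) :
    HasDerivAt (fun t => (c - log (t * a + e)) / k) (-(a / (t * a + e)) / k) t := by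
  have hlin : HasDerivAt (fun t => t * a + e) a t := by
    simpa using ((hasDerivAt_id t).mul_const a).add_const e
  simpa using ((hasDerivAt_const t c).sub (hlin.log ht.ne')).div_const k

lemma exp_neg_mul_sub_scaling {p y A D : ℝ} (hy : y ≠ 0) (hA : A ≠ 0) (hD : 0 < D) :
    exp (-(y * (p - (p * y - log D) / (A * y) * A))) = D⁻¹ := by
  have hlog : -(y * (p - (p * y - log D) / (A * y) * A)) = -log D := by
    field_simp
    ring
  rw [hlog, exp_neg, exp_log hD]

/-- The explicit IWA scaling function for the exponential loss
`ℓ̂(r) = e^{-y r}` with `y ∈ {-1, 1}`: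
`s(h) = (p y - ln(hη‖q‖² + e^{p y})) / (‖q‖² y)` satisfies `s(0) = 0` and
`s'(h) = -η y e^{-y ⟨q, x - s(h) q⟩}` for all `h ≥ 0`. -/
theorem iwa_scaling_exponential_loss
    (d : ℕ) (q : EuclideanSpace ℝ (Fin d)) (hq : q ≠ 0) (η : ℝ) (hη : 0 < η)
    (x : EuclideanSpace ℝ (Fin d)) (y : ℝ) (hy : y = -1 ∨ y = 1)
    (p : ℝ) (hp : p = ⟪q, x⟫)
    (s : ℝ → ℝ)
    (hs : ∀ h : ℝ,
      s h = (p * y - Real.log (h * η * ‖q‖ ^ 2 + Real.exp (p * y))) / (‖q‖ ^ 2 * y)) :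
    s 0 = 0 ∧ ∀ h : ℝ, 0 ≤ h →
      HasDerivAt s (-(η * y * Real.exp (-(y * ⟪q, x - s h • q⟫)))) h := by
  have hA : 0 < ‖q‖ ^ 2 := by have := norm_pos_iff.mpr hq; positivity
  have hy0 : y ≠ 0 := by rcases hy with rfl | rfl <;> norm_num
  have hy_inv : y⁻¹ = y := by rcases hy with rfl | rfl <;> norm_num
  refine ⟨by simp [hs, log_exp], fun h hh => ?_⟩
  have hD : 0 < h * (η * ‖q‖ ^ 2) + exp (p * y) := by positivity
  have hs' : s = fun t => (p * y - log (t * (η * ‖q‖ ^ 2) + exp (p * y))) / (‖q‖ ^ 2 * y) := by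
    funext t
    rw [hs, mul_assoc]
  have hderiv : HasDerivAt s _ h := hs' ▸ hasDerivAt_sub_log_mul_add_div hD
  convert hderiv using 1
  rw [inner_sub_smul_self_right, ← hp, hs', exp_neg_mul_sub_scaling hy0 hA.ne' hD]
  nth_rw 1 [← hy_inv]
  field_simp
end

section
/- Fix q ∈ ℝ^d with q ≠ 0, η > 0, and x ∈ ℝ^d with p = ⟨q, x⟩ > 0. Define s : [0,∞) → ℝ by s(h) = (p − √(p² + 2 h η ‖q‖²)) / ‖q‖². Then s(0) = 0, ⟨q, x − s(h) q⟩ = √(p² + 2 h η ‖q‖²) > 0 for all h ≥ 0, and s'(h) = −η / ⟨q, x − s(h) q⟩ for all h ≥ 0; that is, s is the IWA scaling function for the logarithmic loss with label y = 1, ℓ̂(r) = −ln r. -/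
open scoped RealInnerProductSpace

/-! Along the line `x - s q` the prediction is `r = p - s ‖q‖²`, so the IWA equation
`s' = -η / r` becomes `r r' = η ‖q‖²`, i.e. `(r²)' = 2 η ‖q‖²`. Hence
`r(h) = √(p² + 2 h η ‖q‖²)`, which stays positive, and `s = (p - r) / ‖q‖²`. -/

/-- The IWA scaling function of the logarithmic loss, with `c` standing for `‖q‖²`. -/
noncomputable def logLossScaling (p η c h : ℝ) : ℝ :=
  (p - √(p ^ 2 + 2 * h * η * c)) / c

theorem logLossScaling_zero {p : ℝ} (hp : 0 ≤ p) (η c : ℝ) : logLossScaling p η c 0 = 0 := by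
  simp [logLossScaling, Real.sqrt_sq hp]

theorem sub_logLossScaling_mul {c : ℝ} (hc : c ≠ 0) (p η h : ℝ) :
    p - logLossScaling p η c h * c = √(p ^ 2 + 2 * h * η * c) := by
  rw [logLossScaling, div_mul_cancel₀ _ hc, sub_sub_cancel]

theorem hasDerivAt_sqrt_sq_add_two_mul {p η c h : ℝ} (hpos : 0 < p ^ 2 + 2 * h * η * c) :
    HasDerivAt (fun t => √(p ^ 2 + 2 * t * η * c)) (η * c / √(p ^ 2 + 2 * h * η * c)) h := by
  have hlin : HasDerivAt (fun t => p ^ 2 + 2 * t * η * c) (2 * η * c) h := by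
    simpa [mul_assoc, mul_comm, mul_left_comm] using
      ((hasDerivAt_id h).const_mul (2 * η * c)).const_add (p ^ 2)
  convert hlin.sqrt hpos.ne' using 1
  field_simp

theorem hasDerivAt_logLossScaling {p η c h : ℝ} (hc : c ≠ 0)
    (hpos : 0 < p ^ 2 + 2 * h * η * c) :
    HasDerivAt (logLossScaling p η c) (-(η / √(p ^ 2 + 2 * h * η * c))) h := by
  refine (((hasDerivAt_sqrt_sq_add_two_mul hpos).const_sub p).div_const c).congr_deriv ?_
  field_simp

theorem inner_sub_smul_self {E : Type*} [NormedAddCommGroup E] [InnerProductSpace ℝ E]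
    (q x : E) (a : ℝ) : ⟪q, x - a • q⟫ = ⟪q, x⟫ - a * ‖q‖ ^ 2 := by
  rw [inner_sub_right, real_inner_smul_right, real_inner_self_eq_norm_sq]

/-- The explicit IWA scaling function for the logarithmic loss with label
`y = 1`, `ℓ̂(r) = -ln r`: `s(h) = (p - √(p² + 2hη‖q‖²)) / ‖q‖²` satisfies
`s(0) = 0`, the prediction along the flow is `⟨q, x - s(h) q⟩ =
√(p² + 2hη‖q‖²) > 0`, and `s'(h) = -η / ⟨q, x - s(h) q⟩` for all `h ≥ 0`. -/
theorem iwa_scaling_log_loss_label_one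
    (d : ℕ) (q : EuclideanSpace ℝ (Fin d)) (hq : q ≠ 0) (η : ℝ) (hη : 0 < η)
    (x : EuclideanSpace ℝ (Fin d)) (p : ℝ) (hp : p = ⟪q, x⟫) (hppos : 0 < p)
    (s : ℝ → ℝ)
    (hs : ∀ h : ℝ, s h = (p - Real.sqrt (p ^ 2 + 2 * h * η * ‖q‖ ^ 2)) / ‖q‖ ^ 2) :
    s 0 = 0 ∧ ∀ h : ℝ, 0 ≤ h →
      (⟪q, x - s h • q⟫ = Real.sqrt (p ^ 2 + 2 * h * η * ‖q‖ ^ 2))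
      ∧ (0 < ⟪q, x - s h • q⟫)
      ∧ HasDerivAt s (-(η / ⟪q, x - s h • q⟫)) h := by
  obtain rfl : s = logLossScaling p η (‖q‖ ^ 2) := funext hs
  have hc : ‖q‖ ^ 2 ≠ 0 := by positivity
  have hpred (h : ℝ) : ⟪q, x - logLossScaling p η (‖q‖ ^ 2) h • q⟫ =
      √(p ^ 2 + 2 * h * η * ‖q‖ ^ 2) := by
    rw [inner_sub_smul_self, ← hp, sub_logLossScaling_mul hc]
  refine ⟨logLossScaling_zero hppos.le η _, fun h hh => ?_⟩
  have hpos : 0 < p ^ 2 + 2 * h * η * ‖q‖ ^ 2 := by positivity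
  rw [hpred h]
  exact ⟨rfl, Real.sqrt_pos.2 hpos, hasDerivAt_logLossScaling hc hpos⟩
end

section
/- Fix q ∈ ℝ^d with q ≠ 0, η > 0, x ∈ ℝ^d, and y ∈ {−1, 1}, and write p = ⟨q, x⟩. Consider the exponential loss ℓ(w) = e^{−y ⟨q,w⟩} with conjugate ℓ*(z) = sup_w (⟨z,w⟩ − ℓ(w)), and define H(z) = (η/2)‖x/η − z‖² + ℓ*(z). Let g = −y e^{−y p} q and let z = (1/η) s(1) q where s(1) = (p y − ln(η ‖q‖² + e^{p y})) / (‖q‖² y) is the IWA scaling. Then H(z) ≤ H(g). -/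
/-!
Both `g` and `z` lie on the ray `β ↦ -(y β) • q`, `β > 0`: for `g` with `β = e^{-py}`, for `z`
with `β = (log (η‖q‖² + e^{py}) - py) / (η‖q‖²)`. On that ray `ℓ*` is the negative entropy
`β log β - β`, so `H` is, up to a constant, the convex function
`φ(β) = c/2 β² + m β + β log β - β` with `c = η‖q‖²`, `m = py`. The bounds
`1 - r⁻¹ ≤ log r ≤ r - 1` at `r = 1 + c e^{-m}` give `β_z ≤ β_g` and `φ'(β_z) ≥ 0`, and the
tangent line of `φ` at `β_z` then yields `φ(β_z) ≤ φ(β_g)`.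
-/

open Real
open scoped RealInnerProductSpace

lemma neg_mul_sub_exp_neg_le {β : ℝ} (hβ : 0 < β) (u : ℝ) :
    -(β * u) - exp (-u) ≤ β * log β - β := by
  have hexp : exp (-u) = β * exp (-u - log β) := by
    rw [exp_sub, exp_log hβ]; field_simp
  have htangent := add_one_le_exp (-u - log β)
  nlinarith [mul_le_mul_of_nonneg_left htangent hβ.le]

section InnerProductSpace

variable {E : Type*} [NormedAddCommGroup E] [InnerProductSpace ℝ E]

lemma iSup_inner_neg_smul_sub_exp_neg_inner {a : E} (ha : a ≠ 0) {β : ℝ} (hβ : 0 < β) :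
    ⨆ w : E, ((⟪-β • a, w⟫ - exp (-⟪a, w⟫) : ℝ) : EReal) = ((β * log β - β : ℝ) : EReal) := by
  apply le_antisymm
  · refine iSup_le fun w => EReal.coe_le_coe_iff.mpr ?_
    rw [real_inner_smul_left]
    simpa only [neg_mul] using neg_mul_sub_exp_neg_le hβ ⟪a, w⟫
  · have ha2 : ‖a‖ ^ 2 ≠ 0 := pow_ne_zero 2 (norm_ne_zero_iff.mpr ha)
    have hmax : ⟪a, (-log β / ‖a‖ ^ 2) • a⟫ = -log β := by
      rw [real_inner_smul_right, real_inner_self_eq_norm_sq, div_mul_cancel₀ _ ha2]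
    refine le_iSup_of_le ((-log β / ‖a‖ ^ 2) • a) (EReal.coe_le_coe_iff.mpr (le_of_eq ?_))
    rw [real_inner_smul_left, hmax, neg_neg, exp_log hβ]
    ring

lemma half_mul_norm_inv_smul_sub_smul_sq {η : ℝ} (hη : η ≠ 0) (x q : E) (s : ℝ) :
    η / 2 * ‖η⁻¹ • x - s • q‖ ^ 2
      = η / 2 * ‖η⁻¹ • x‖ ^ 2 - s * ⟪q, x⟫ + η * ‖q‖ ^ 2 / 2 * s ^ 2 := by
  rw [norm_sub_sq_real, real_inner_smul_left, real_inner_smul_right, real_inner_comm q x,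
    norm_smul s q, mul_pow, Real.norm_eq_abs, sq_abs]
  field_simp

end InnerProductSpace

lemma log_add_exp_sub_le {c : ℝ} (hc : 0 ≤ c) (m : ℝ) :
    log (c + exp m) - m ≤ c * exp (-m) := by
  have hr := log_le_sub_one_of_pos (x := (c + exp m) / exp m) (by positivity)
  rw [log_div (by positivity) (exp_pos m).ne', log_exp, add_div, div_self (exp_pos m).ne',
    div_eq_mul_inv, ← exp_neg] at hr
  linarith

lemma log_add_exp_sub_pos {c : ℝ} (hc : 0 < c) (m : ℝ) : 0 < log (c + exp m) - m := by
  have h := log_lt_log (exp_pos m) (lt_add_of_pos_left (exp m) hc)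
  rw [log_exp] at h
  linarith

lemma div_add_exp_le_log_add_exp_sub {c : ℝ} (hc : 0 ≤ c) (m : ℝ) :
    c / (c + exp m) ≤ log (c + exp m) - m := by
  have hpos : 0 < c + exp m := by positivity
  have hr := one_sub_inv_le_log_of_pos (x := (c + exp m) / exp m) (by positivity)
  rw [log_div hpos.ne' (exp_pos m).ne', log_exp, inv_div] at hr
  calc c / (c + exp m) = 1 - exp m / (c + exp m) := by field_simp; ring
    _ ≤ log (c + exp m) - m := hr

/-- `H (-(y * β) • q)` up to an additive constant, with `c = η‖q‖²` and `m = p y`. -/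
noncomputable def expLossDualRay (c m β : ℝ) : ℝ :=
  c / 2 * β ^ 2 + m * β + (β * log β - β)

lemma expLossDualRay_add_deriv_mul_le {c : ℝ} (hc : 0 ≤ c) (m : ℝ) {a b : ℝ} (ha : 0 < a)
    (hb : 0 < b) :
    expLossDualRay c m a + (c * a + m + log a) * (b - a) ≤ expLossDualRay c m b := by
  have hentropy : b - a ≤ b * log (b / a) := by
    have h := one_sub_inv_le_log_of_pos (div_pos hb ha)
    rw [inv_div] at h
    have hba : b * (1 - a / b) = b - a := by field_simp
    nlinarith [mul_le_mul_of_nonneg_left h hb.le]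
  rw [log_div hb.ne' ha.ne'] at hentropy
  unfold expLossDualRay
  nlinarith [mul_nonneg hc (sq_nonneg (b - a))]

lemma expLossDualRay_iwa_le_gradient {c : ℝ} (hc : 0 < c) (m : ℝ) :
    expLossDualRay c m ((log (c + exp m) - m) / c) ≤ expLossDualRay c m (exp (-m)) := by
  set βz := (log (c + exp m) - m) / c with hβz
  have hlower := div_add_exp_le_log_add_exp_sub hc.le m
  have hpos : 0 < c + exp m := by positivity
  have hcβz : c * βz = log (c + exp m) - m := by rw [hβz]; field_simp
  have hβz_pos : 0 < βz := div_pos (log_add_exp_sub_pos hc m) hc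
  have hβz_le : βz ≤ exp (-m) := by
    rw [hβz, div_le_iff₀ hc, mul_comm]; exact log_add_exp_sub_le hc.le m
  have hderiv : 0 ≤ c * βz + m + log βz := by
    have hinv : (c + exp m)⁻¹ ≤ βz := by
      rw [hβz, le_div_iff₀ hc, ← div_eq_inv_mul]; exact hlower
    have hlog := log_le_log (inv_pos.mpr hpos) hinv
    rw [log_inv] at hlog
    linarith
  calc expLossDualRay c m βz
      ≤ expLossDualRay c m βz + (c * βz + m + log βz) * (exp (-m) - βz) :=
        le_add_of_nonneg_right (mul_nonneg hderiv (sub_nonneg.mpr hβz_le))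
    _ ≤ expLossDualRay c m (exp (-m)) :=
        expLossDualRay_add_deriv_mul_le hc.le m hβz_pos (exp_pos _)

/-- The IWA dual vector for the exponential loss `ℓ(w) = e^{-y⟨q,w⟩}`,
`y ∈ {-1,1}`, satisfies `H(z) ≤ H(g)`, where `g = -y e^{-yp} q` is the gradient
at `x`, `z = (1/η) s(1) q` with `s(1) = (py - ln(η‖q‖² + e^{py}))/(‖q‖² y)` the
IWA scaling, and `H(z) = (η/2)‖x/η - z‖² + ℓ*(z)`. -/
theorem iwa_exponential_loss_H_le
    (d : ℕ) (q : EuclideanSpace ℝ (Fin d)) (hq : q ≠ 0) (η : ℝ) (hη : 0 < η)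
    (x : EuclideanSpace ℝ (Fin d)) (y : ℝ) (hy : y = -1 ∨ y = 1)
    (p : ℝ) (hp : p = ⟪q, x⟫)
    (lstar : EuclideanSpace ℝ (Fin d) → EReal)
    (hlstar : ∀ zz, lstar zz
      = ⨆ w, ((⟪zz, w⟫ - Real.exp (-(y * ⟪q, w⟫)) : ℝ) : EReal))
    (H : EuclideanSpace ℝ (Fin d) → EReal)
    (hH : ∀ zz, H zz = ((η / 2 * ‖η⁻¹ • x - zz‖ ^ 2 : ℝ) : EReal) + lstar zz)
    (g z : EuclideanSpace ℝ (Fin d))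
    (hg : g = (-(y * Real.exp (-(y * p)))) • q)
    (hz : z = (η⁻¹ * ((p * y - Real.log (η * ‖q‖ ^ 2 + Real.exp (p * y)))
      / (‖q‖ ^ 2 * y))) • q) :
    H z ≤ H g := by
  have hy2 : y * y = 1 := by rcases hy with rfl | rfl <;> norm_num
  have hy0 : y ≠ 0 := left_ne_zero_of_mul_eq_one hy2
  have hc : 0 < η * ‖q‖ ^ 2 := by have := norm_pos_iff.mpr hq; positivity
  have hray : ∀ β > 0, H ((-(y * β)) • q)
      = ((η / 2 * ‖η⁻¹ • x‖ ^ 2 + expLossDualRay (η * ‖q‖ ^ 2) (p * y) β : ℝ) : EReal) := by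
    intro β hβ
    have hconj : lstar ((-(y * β)) • q) = ((β * log β - β : ℝ) : EReal) := by
      rw [hlstar, ← iSup_inner_neg_smul_sub_exp_neg_inner (smul_ne_zero hy0 hq) hβ]
      refine congrArg iSup (funext fun w => ?_)
      simp only [real_inner_smul_left]
      ring_nf
    rw [hH, hconj, ← EReal.coe_add, half_mul_norm_inv_smul_sub_smul_sq hη.ne', ← hp,
      expLossDualRay]
    congr 1
    linear_combination (η * ‖q‖ ^ 2 / 2 * β ^ 2) * hy2
  have hzray : z = (-(y * ((log (η * ‖q‖ ^ 2 + exp (p * y)) - p * y)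
      / (η * ‖q‖ ^ 2)))) • q := by
    rw [hz]
    congr 1
    field_simp
    linear_combination (log (η * ‖q‖ ^ 2 + exp (p * y)) - p * y) * hy2
  rw [hzray, hg, mul_comm y p, hray _ (div_pos (log_add_exp_sub_pos hc _) hc),
    hray _ (exp_pos _), EReal.coe_le_coe_iff]
  exact add_le_add_right (expLossDualRay_iwa_le_gradient hc (p * y)) _
end
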